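/- With the trajectory and greedy setup, suppose each action a_t lies in the box [-1,1]^m and maximizes Q_t over [-1,1]^m, the value-gradients G_t := ∇Ṽ(x_t) satisfy G_F = 0 and the costate recursion G_t = ∇_x r(x_t, a_t) + γ (D_x f(x_t, a_t))ᵀ G_{t+1} for 0 ≤ t < F, and additionally every action component is saturated: |a_t^i| = 1 and ∂Q_t/∂a^i(a_t) ≠ 0 for all t and i. Then the trajectory is locally optimal: the total reward R, viewed as a function of the action tuple with x₀ fixed, has a local maximum at (a₀, …, a_{F−1}) relative to the constraint set ([-1,1]^m)^F. -/

import Mathlib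

/-!
Differentiating the total reward through the trajectory and eliminating the state sensitivities
with the costate recursion (the discrete adjoint method) shows that the derivative of `R` at `a`
is `w ↦ ∑ₜ γᵗ DQₜ(aₜ) wₜ`. Greediness makes every saturated partial derivative of `Qₜ` point out
of the box, i.e. `aₜⁱ ∂ᵢQₜ(aₜ) > 0`, so at the vertex `a` this linear functional decreases at a
linear rate `c ‖v - a‖` along the box, which beats the `o(‖v - a‖)` remainder of `R`.
-/

open Matrix

/-- Gradient of a scalar function, as a vector of partial derivatives. -/
noncomputable def grad {k : ℕ} (g : (Fin k → ℝ) → ℝ) (x : Fin k → ℝ) : Fin k → ℝ :=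
  fun i => fderiv ℝ g x (Pi.single i 1)

/-- Gradient of `r` in the state variable. -/
noncomputable def gradX {n m : ℕ} (r : (Fin n → ℝ) × (Fin m → ℝ) → ℝ)
    (x : Fin n → ℝ) (a : Fin m → ℝ) : Fin n → ℝ :=
  fun i => fderiv ℝ (fun y => r (y, a)) x (Pi.single i 1)

/-- Jacobian of `f` in the state variable (rows indexed by output components). -/
noncomputable def jacX {n m : ℕ} (f : (Fin n → ℝ) × (Fin m → ℝ) → Fin n → ℝ)
    (x : Fin n → ℝ) (a : Fin m → ℝ) : Matrix (Fin n) (Fin n) ℝ :=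
  Matrix.of fun j i => fderiv ℝ (fun y => f (y, a) j) x (Pi.single i 1)

/-- Extend a finite action tuple to all of `ℕ` (by `0` beyond `F`). -/
noncomputable def pad {F m : ℕ} (as : Fin F → Fin m → ℝ) : ℕ → Fin m → ℝ :=
  fun t => if h : t < F then as ⟨t, h⟩ else 0

/-- The trajectory generated from `x₀` by the actions `as`. -/
def traj {n m : ℕ} (f : (Fin n → ℝ) × (Fin m → ℝ) → Fin n → ℝ)
    (x₀ : Fin n → ℝ) (as : ℕ → Fin m → ℝ) : ℕ → Fin n → ℝ
  | 0 => x₀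
  | t + 1 => f (traj f x₀ as t, as t)

/-- The total (discounted) reward, as a function of the whole action tuple. -/
noncomputable def Rtot {n m : ℕ} (F : ℕ) (γ : ℝ)
    (f : (Fin n → ℝ) × (Fin m → ℝ) → Fin n → ℝ)
    (r : (Fin n → ℝ) × (Fin m → ℝ) → ℝ)
    (x₀ : Fin n → ℝ) (as : Fin F → Fin m → ℝ) : ℝ :=
  ∑ t ∈ Finset.range F, γ ^ t * r (traj f x₀ (pad as) t, pad as t)


open Filter Topology

section SharpMax

variable {E : Type*} [NormedAddCommGroup E]

def IsSharpMaxOn (φ : E → ℝ) (s : Set E) (a : E) : Prop :=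
  ∃ c > 0, ∀ v ∈ s, φ v ≤ φ a - c * ‖v - a‖

theorem IsSharpMaxOn.isLocalMaxOn_of_hasFDerivWithinAt [NormedSpace ℝ E] {R : E → ℝ}
    {ℓ : E →L[ℝ] ℝ} {s : Set E} {a : E} (hℓ : IsSharpMaxOn ℓ s a)
    (hR : HasFDerivWithinAt R ℓ s a) : IsLocalMaxOn R s a := by
  obtain ⟨c, hc, hsharp⟩ := hℓ
  filter_upwards [hR.isLittleO.def hc, self_mem_nhdsWithin] with v hv hvs
  have hlin : ℓ (v - a) ≤ -(c * ‖v - a‖) := by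
    rw [map_sub]; linarith [hsharp v hvs]
  have hrem := (abs_le.mp (Real.norm_eq_abs _ ▸ hv)).2
  linarith

theorem isSharpMaxOn_mul_Icc {α q : ℝ} (hα : |α| = 1) (hq : 0 < α * q) :
    IsSharpMaxOn (fun β => β * q) (Set.Icc (-1) 1) α := by
  refine ⟨|q|, abs_pos.mpr (right_ne_zero_of_mul hq.ne'), fun β ⟨hβ₁, hβ₂⟩ => ?_⟩
  rw [Real.norm_eq_abs]
  rcases abs_eq zero_le_one |>.mp hα with rfl | rfl
  · rw [abs_of_pos (by linarith), abs_of_nonpos (by linarith)]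
    nlinarith
  · rw [abs_of_neg (by linarith), abs_of_nonneg (by linarith)]
    nlinarith

theorem IsSharpMaxOn.sum_pi {ι : Type*} [Fintype ι] {E : ι → Type*}
    [∀ i, NormedAddCommGroup (E i)] {φ : ∀ i, E i → ℝ} {s : ∀ i, Set (E i)} {a : ∀ i, E i}
    (h : ∀ i, IsSharpMaxOn (φ i) (s i) (a i)) :
    IsSharpMaxOn (fun v => ∑ i, φ i (v i)) (Set.univ.pi s) a := by
  choose c hc hsharp using h
  obtain ⟨c₀, hc₀, hc₀le⟩ : ∃ c₀ > 0, ∀ i, c₀ ≤ c i :=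
    ((eventually_all.2 fun i => (eventually_le_nhds (hc i)).filter_mono nhdsWithin_le_nhds).and
      self_mem_nhdsWithin).exists (f := 𝓝[>] (0 : ℝ)) |>.imp fun _ h => ⟨h.2, h.1⟩
  refine ⟨c₀, hc₀, fun v hv => ?_⟩
  have hnorm : ‖v - a‖ ≤ ∑ i, ‖v i - a i‖ :=
    (pi_norm_le_iff_of_nonneg (by positivity)).2 fun i =>
      Finset.single_le_sum (f := fun i => ‖v i - a i‖) (fun _ _ => norm_nonneg _)
        (Finset.mem_univ i)
  calc ∑ i, φ i (v i) ≤ ∑ i, (φ i (a i) - c i * ‖v i - a i‖) :=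
        Finset.sum_le_sum fun i _ => hsharp i (v i) (hv i (Set.mem_univ i))
    _ ≤ ∑ i, (φ i (a i) - c₀ * ‖v i - a i‖) := by
        gcongr with i; exact hc₀le i
    _ ≤ ∑ i, φ i (a i) - c₀ * ‖v - a‖ := by
        rw [Finset.sum_sub_distrib, ← Finset.mul_sum]; gcongr

theorem isSharpMaxOn_cube {ι : Type*} [Fintype ι] [DecidableEq ι] {ℓ : (ι → ℝ) →L[ℝ] ℝ}
    {a : ι → ℝ} (ha : ∀ i, |a i| = 1) (hℓ : ∀ i, 0 < a i * ℓ (Pi.single i 1)) :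
    IsSharpMaxOn ℓ (Set.univ.pi fun _ => Set.Icc (-1) 1) a := by
  have hsum : ⇑ℓ = fun v => ∑ i, v i * ℓ (Pi.single i 1) := by
    ext v
    conv_lhs => rw [pi_eq_sum_univ' v]
    simp [map_sum]
  rw [hsum]
  exact IsSharpMaxOn.sum_pi fun i => isSharpMaxOn_mul_Icc (ha i) (hℓ i)

end SharpMax

theorem mul_fderiv_pos_of_isMaxOn_cube {ι : Type*} [Fintype ι] [DecidableEq ι]
    {Q : (ι → ℝ) → ℝ} {a : ι → ℝ} (hQ : DifferentiableAt ℝ Q a)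
    (hmax : IsMaxOn Q (Set.univ.pi fun _ => Set.Icc (-1) 1) a)
    (ha : a ∈ Set.univ.pi fun _ => Set.Icc (-1) 1) {i : ι} (hai : |a i| = 1)
    (hne : fderiv ℝ Q a (Pi.single i 1) ≠ 0) :
    0 < a i * fderiv ℝ Q a (Pi.single i 1) := by
  have hflip : Function.update a i (-a i) ∈ Set.univ.pi fun _ => Set.Icc (-1 : ℝ) 1 := by
    intro j _
    rcases eq_or_ne j i with rfl | hj
    · rcases abs_eq zero_le_one |>.mp hai with h | h <;> simp [h]
    · simpa [hj] using ha j (Set.mem_univ j)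
  have hdir : Function.update a i (-a i) - a = (-2 * a i) • Pi.single i 1 := by
    ext j
    rcases eq_or_ne j i with rfl | hj
    · simp; ring
    · simp [hj]
  have hle := hmax.localize.hasFDerivWithinAt_nonpos hQ.hasFDerivAt.hasFDerivWithinAt
    (sub_mem_posTangentConeAt_of_segment_subset
      ((convex_pi fun _ _ => convex_Icc _ _).segment_subset ha hflip))
  rw [hdir, map_smul, smul_eq_mul] at hle
  have hai₀ : a i ≠ 0 := by rintro h; simp [h] at hai
  exact lt_of_le_of_ne (by linarith) (mul_ne_zero hai₀ hne).symm

theorem grad_dotProduct {k : ℕ} (g : (Fin k → ℝ) → ℝ) (x z : Fin k → ℝ) :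
    grad g x ⬝ᵥ z = fderiv ℝ g x z := by
  conv_rhs => rw [pi_eq_sum_univ' z]
  simp [grad, dotProduct, map_sum, mul_comm]

section PartialDerivatives

variable {n m : ℕ} {W : Type*} [NormedAddCommGroup W] [NormedSpace ℝ W]

theorem fderiv_comp_prodMk_left {g : (Fin n → ℝ) × (Fin m → ℝ) → W} {x : Fin n → ℝ}
    {b : Fin m → ℝ} (hg : DifferentiableAt ℝ g (x, b)) :
    fderiv ℝ (fun y => g (y, b)) x = (fderiv ℝ g (x, b)).comp (.inl ℝ _ _) :=
  (hg.hasFDerivAt.comp x (hasFDerivAt_prodMk_left x b)).fderiv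

theorem gradX_dotProduct {r : (Fin n → ℝ) × (Fin m → ℝ) → ℝ} {x : Fin n → ℝ}
    {b : Fin m → ℝ} (hr : DifferentiableAt ℝ r (x, b)) (z : Fin n → ℝ) :
    gradX r x b ⬝ᵥ z = fderiv ℝ r (x, b) (z, 0) := by
  rw [show gradX r x b = grad (fun y => r (y, b)) x from rfl, grad_dotProduct,
    fderiv_comp_prodMk_left hr]
  rfl

theorem jacX_mulVec {f : (Fin n → ℝ) × (Fin m → ℝ) → Fin n → ℝ} {x : Fin n → ℝ}
    {b : Fin m → ℝ} (hf : DifferentiableAt ℝ f (x, b)) (z : Fin n → ℝ) :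
    jacX f x b *ᵥ z = fderiv ℝ f (x, b) (z, 0) := by
  ext j
  rw [show (jacX f x b *ᵥ z) j = grad (fun y => f (y, b) j) x ⬝ᵥ z from rfl, grad_dotProduct,
    fderiv_apply (hf.comp x (hasFDerivAt_prodMk_left x b).differentiableAt) j,
    fderiv_comp_prodMk_left hf]
  rfl

end PartialDerivatives

theorem map_prodMk_eq_add {M N P G : Type*} [AddZeroClass M] [AddZeroClass N] [AddZeroClass P]
    [FunLike G (M × N) P] [AddMonoidHomClass G (M × N) P] (L : G) (z : M) (v : N) :
    L (z, v) = L (z, 0) + L (0, v) := by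
  rw [← map_add, Prod.mk_add_mk, add_zero, zero_add]

theorem sum_pow_mul_eq_of_costate {R E : Type*} [CommRing R] [AddCommGroup E] [Module R E]
    {γ : R} {F : ℕ} {A : ℕ → E → E} {c : ℕ → E → R} {p : ℕ → E →ₗ[R] R} {y b : ℕ → E}
    (hy₀ : y 0 = 0) (hy : ∀ t < F, y (t + 1) = A t (y t) + b t)
    (hp : ∀ t < F, ∀ z, p t z = c t z + γ * p (t + 1) (A t z)) (hpF : p F = 0) :
    ∑ t ∈ Finset.range F, γ ^ t * c t (y t) =
      ∑ t ∈ Finset.range F, γ ^ (t + 1) * p (t + 1) (b t) := by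
  have hstep : ∀ t ∈ Finset.range F, γ ^ t * c t (y t) - γ ^ (t + 1) * p (t + 1) (b t) =
      γ ^ t * p t (y t) - γ ^ (t + 1) * p (t + 1) (y (t + 1)) := by
    intro t ht
    rw [Finset.mem_range] at ht
    rw [hy t ht, map_add, hp t ht]
    ring
  rw [← sub_eq_zero, ← Finset.sum_sub_distrib, Finset.sum_congr rfl hstep,
    Finset.sum_range_sub' (fun t => γ ^ t * p t (y t)), hy₀, hpF]
  simp

section Trajectory

variable {n m : ℕ} {P : Type*} [NormedAddCommGroup P] [NormedSpace ℝ P]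

noncomputable def trajFDeriv (f : (Fin n → ℝ) × (Fin m → ℝ) → Fin n → ℝ) (x₀ : Fin n → ℝ)
    (u : ℕ → Fin m → ℝ) (u' : ℕ → P →L[ℝ] (Fin m → ℝ)) : ℕ → P →L[ℝ] (Fin n → ℝ)
  | 0 => 0
  | t + 1 => (fderiv ℝ f (traj f x₀ u t, u t)).comp ((trajFDeriv f x₀ u u' t).prod (u' t))

theorem hasFDerivAt_traj {f : (Fin n → ℝ) × (Fin m → ℝ) → Fin n → ℝ} (hf : Differentiable ℝ f)
    (x₀ : Fin n → ℝ) {u : P → ℕ → Fin m → ℝ} {u' : ℕ → P →L[ℝ] (Fin m → ℝ)} {p₀ : P}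
    (hu : ∀ t, HasFDerivAt (fun p => u p t) (u' t) p₀) (t : ℕ) :
    HasFDerivAt (fun p => traj f x₀ (u p) t) (trajFDeriv f x₀ (u p₀) u' t) p₀ := by
  induction t with
  | zero => exact hasFDerivAt_const x₀ p₀
  | succ t ih => exact (hf _).hasFDerivAt.comp p₀ (ih.prodMk (hu t))

end Trajectory

noncomputable def padCLM (F m t : ℕ) : (Fin F → Fin m → ℝ) →L[ℝ] (Fin m → ℝ) :=
  if h : t < F then .proj (⟨t, h⟩ : Fin F) else 0

theorem padCLM_apply {F m : ℕ} (t : ℕ) (as : Fin F → Fin m → ℝ) :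
    padCLM F m t as = pad as t := by
  unfold padCLM pad
  split_ifs <;> rfl

theorem pad_val {F m : ℕ} (as : Fin F → Fin m → ℝ) (t : Fin F) : pad as t = as t := by
  simp [pad]

section TotalReward

variable {n m F : ℕ} {γ : ℝ} {f : (Fin n → ℝ) × (Fin m → ℝ) → Fin n → ℝ}
  {r : (Fin n → ℝ) × (Fin m → ℝ) → ℝ} {V : (Fin n → ℝ) → ℝ}

theorem hasFDerivAt_Rtot (hf : Differentiable ℝ f) (hr : Differentiable ℝ r)
    (x₀ : Fin n → ℝ) (a : Fin F → Fin m → ℝ) :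
    HasFDerivAt (Rtot F γ f r x₀)
      (∑ t ∈ Finset.range F, γ ^ t • (fderiv ℝ r (traj f x₀ (pad a) t, pad a t)).comp
        ((trajFDeriv f x₀ (pad a) (padCLM F m) t).prod (padCLM F m t))) a := by
  have hpad : ∀ t, HasFDerivAt (fun as : Fin F → Fin m → ℝ => pad as t) (padCLM F m t) a :=
    fun t => by
      rw [← funext (padCLM_apply (F := F) (m := m) t)]
      exact (padCLM F m t).hasFDerivAt
  refine HasFDerivAt.fun_sum fun t _ => ?_
  exact ((hr _).hasFDerivAt.comp a ((hasFDerivAt_traj hf x₀ hpad t).prodMk (hpad t))).const_mul _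

theorem fderiv_costate_apply {x x' : Fin n → ℝ} {b : Fin m → ℝ}
    (hr : DifferentiableAt ℝ r (x, b)) (hf : DifferentiableAt ℝ f (x, b))
    (h : grad V x = gradX r x b + γ • (jacX f x b)ᵀ *ᵥ grad V x') (z : Fin n → ℝ) :
    fderiv ℝ V x z = fderiv ℝ r (x, b) (z, 0) + γ * fderiv ℝ V x' (fderiv ℝ f (x, b) (z, 0)) := by
  rw [← grad_dotProduct, h, add_dotProduct, smul_dotProduct, gradX_dotProduct hr,
    Matrix.mulVec_transpose, ← Matrix.dotProduct_mulVec, jacX_mulVec hf, grad_dotProduct,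
    smul_eq_mul]

theorem fderiv_actionValue_apply {x : Fin n → ℝ} {b : Fin m → ℝ} (hr : DifferentiableAt ℝ r (x, b))
    (hf : DifferentiableAt ℝ f (x, b)) (hV : DifferentiableAt ℝ V (f (x, b))) (v : Fin m → ℝ) :
    fderiv ℝ (fun b => r (x, b) + γ * V (f (x, b))) b v =
      fderiv ℝ r (x, b) (0, v) + γ * fderiv ℝ V (f (x, b)) (fderiv ℝ f (x, b) (0, v)) := by
  have hb := hasFDerivAt_prodMk_right (𝕜 := ℝ) x b
  have hQ : HasFDerivAt (fun b => r (x, b) + γ * V (f (x, b))) _ b :=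
    (hr.hasFDerivAt.comp b hb).add ((hV.hasFDerivAt.comp b (hf.hasFDerivAt.comp b hb)).const_mul γ)
  rw [hQ.fderiv]
  rfl

theorem hasFDerivAt_Rtot_of_costate (hf : Differentiable ℝ f) (hr : Differentiable ℝ r)
    (hV : Differentiable ℝ V) {x₀ : Fin n → ℝ} {a : Fin F → Fin m → ℝ} {x : ℕ → Fin n → ℝ}
    (hx : x = traj f x₀ (pad a))
    (hcostate : ∀ t < F, grad V (x t) =
      gradX r (x t) (pad a t) + γ • (jacX f (x t) (pad a t))ᵀ *ᵥ grad V (x (t + 1)))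
    (hterminal : grad V (x F) = 0) :
    HasFDerivAt (Rtot F γ f r x₀) (∑ t : Fin F, (γ ^ (t : ℕ) •
      fderiv ℝ (fun b => r (x t, b) + γ * V (f (x t, b))) (a t)).comp (.proj t)) a := by
  refine (hasFDerivAt_Rtot hf hr x₀ a).congr_fderiv (ContinuousLinearMap.ext fun w => ?_)
  subst hx
  set x := traj f x₀ (pad a)
  set y := fun t => trajFDeriv f x₀ (pad a) (padCLM F m) t w
  have htel := sum_pow_mul_eq_of_costate (γ := γ) (F := F) (y := y)
    (A := fun t z => fderiv ℝ f (x t, pad a t) (z, 0))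
    (b := fun t => fderiv ℝ f (x t, pad a t) (0, pad w t))
    (c := fun t z => fderiv ℝ r (x t, pad a t) (z, 0))
    (p := fun t => (fderiv ℝ V (x t) : (Fin n → ℝ) →ₗ[ℝ] ℝ)) rfl
    (fun t _ => by
      simp only [y, trajFDeriv, ContinuousLinearMap.comp_apply, ContinuousLinearMap.prod_apply,
        padCLM_apply]
      exact map_prodMk_eq_add _ _ _)
    (fun t ht z => fderiv_costate_apply (hr _) (hf _) (hcostate t ht) z)
    (LinearMap.ext fun z => by
      rw [ContinuousLinearMap.coe_coe, ← grad_dotProduct, hterminal, zero_dotProduct]; rfl)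
  simp only [_root_.sum_apply, _root_.smul_apply,
    ContinuousLinearMap.comp_apply, ContinuousLinearMap.prod_apply, padCLM_apply,
    ContinuousLinearMap.proj_apply, smul_eq_mul, ContinuousLinearMap.coe_coe] at htel ⊢
  have hQ : ∀ t : Fin F, γ ^ (t : ℕ) *
      fderiv ℝ (fun b => r (x t, b) + γ * V (f (x t, b))) (a t) (w t) =
      γ ^ (t : ℕ) * (fderiv ℝ r (x t, pad a t) (0, pad w t) +
        γ * fderiv ℝ V (x (t + 1)) (fderiv ℝ f (x t, pad a t) (0, pad w t))) := fun t => by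
    rw [← pad_val a t, ← pad_val w t, fderiv_actionValue_apply (hr _) (hf _) (hV _)]
    rfl
  calc _ = ∑ t ∈ Finset.range F, (γ ^ t * fderiv ℝ r (x t, pad a t) (y t, 0) +
        γ ^ t * fderiv ℝ r (x t, pad a t) (0, pad w t)) :=
        Finset.sum_congr rfl fun t _ => by rw [map_prodMk_eq_add, mul_add]
    _ = ∑ t ∈ Finset.range F, γ ^ t * (fderiv ℝ r (x t, pad a t) (0, pad w t) +
        γ * fderiv ℝ V (x (t + 1)) (fderiv ℝ f (x t, pad a t) (0, pad w t))) := by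
      rw [Finset.sum_add_distrib, htel, ← Finset.sum_add_distrib]
      exact Finset.sum_congr rfl fun t _ => by ring
    _ = _ := by
      rw [Finset.sum_congr rfl fun t _ => hQ t, Fin.sum_univ_eq_sum_range (fun t => γ ^ t *
        (fderiv ℝ r (x t, pad a t) (0, pad w t) +
          γ * fderiv ℝ V (x (t + 1)) (fderiv ℝ f (x t, pad a t) (0, pad w t))))]

end TotalReward

theorem stmt9_general {n m : ℕ} (F : ℕ) (γ : ℝ) (hγ : 0 < γ)
    (f : (Fin n → ℝ) × (Fin m → ℝ) → Fin n → ℝ)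
    (r : (Fin n → ℝ) × (Fin m → ℝ) → ℝ)
    (hf : ContDiff ℝ 1 f) (hr : ContDiff ℝ 1 r)
    (V : (Fin n → ℝ) → ℝ) (hV : Differentiable ℝ V)
    (x₀ : Fin n → ℝ) (a : Fin F → Fin m → ℝ)
    (x : ℕ → Fin n → ℝ) (hxdef : x = traj f x₀ (pad a))
    (Q : ℕ → (Fin m → ℝ) → ℝ)
    (hQdef : ∀ t, Q t = fun b => r (x t, b) + γ * V (f (x t, b)))
    (hbox : ∀ t : Fin F, ∀ i, a t i ∈ Set.Icc (-1 : ℝ) 1)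
    (hgreedy : ∀ t : Fin F, ∀ b : Fin m → ℝ,
      (∀ i, b i ∈ Set.Icc (-1 : ℝ) 1) → Q t b ≤ Q t (a t))
    (G : ℕ → Fin n → ℝ) (hGdef : ∀ t, G t = grad V (x t))
    (hGF : G F = 0)
    (hGrec : ∀ t < F, G t =
      gradX r (x t) (pad a t) + γ • (jacX f (x t) (pad a t))ᵀ.mulVec (G (t + 1)))
    (hsat : ∀ t : Fin F, ∀ i : Fin m,
      |a t i| = 1 ∧ fderiv ℝ (Q t) (a t) (Pi.single i 1) ≠ 0) :
    IsLocalMaxOn (Rtot F γ f r x₀)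
      {as : Fin F → Fin m → ℝ | ∀ t i, as t i ∈ Set.Icc (-1 : ℝ) 1} a := by
  have hf' := hf.differentiable one_ne_zero
  have hr' := hr.differentiable one_ne_zero
  simp only [hGdef] at hGF hGrec
  have hRD := hasFDerivAt_Rtot_of_costate hf' hr' hV hxdef hGrec hGF
  obtain rfl : Q = fun t b => r (x t, b) + γ * V (f (x t, b)) := funext hQdef
  have hsign : ∀ t i, 0 < a t i * (γ ^ (t : ℕ) •
      fderiv ℝ (fun b => r (x t, b) + γ * V (f (x t, b))) (a t)) (Pi.single i 1) := by
    intro t i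
    rw [_root_.smul_apply, smul_eq_mul, mul_left_comm]
    exact mul_pos (pow_pos hγ _) (mul_fderiv_pos_of_isMaxOn_cube (by fun_prop)
      (fun b hb => hgreedy t b fun i => hb i (Set.mem_univ i))
      (fun i _ => hbox t i) (hsat t i).1 (hsat t i).2)
  have hsharp := IsSharpMaxOn.sum_pi fun t => isSharpMaxOn_cube (fun i => (hsat t i).1) (hsign t)
  have hset : {as : Fin F → Fin m → ℝ | ∀ t i, as t i ∈ Set.Icc (-1 : ℝ) 1} =
      Set.univ.pi fun _ => Set.univ.pi fun _ => Set.Icc (-1) 1 := by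
    ext; simp only [Set.mem_ofPred_eq, Set.mem_univ_pi]
  rw [hset]
  refine IsSharpMaxOn.isLocalMaxOn_of_hasFDerivWithinAt ?_ hRD.hasFDerivWithinAt
  convert hsharp using 1
  ext v
  simp

/-- Corollary to Theorem 1: a greedy trajectory satisfying the
costate recursion on which every action component is saturated (bang-bang
control) is locally optimal within the box constraints. -/
theorem stmt9 {n m : ℕ} (F : ℕ) (hF : 1 ≤ F) (γ : ℝ) (hγ : 0 < γ)
    (f : (Fin n → ℝ) × (Fin m → ℝ) → Fin n → ℝ)
    (r : (Fin n → ℝ) × (Fin m → ℝ) → ℝ)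
    (hf : ContDiff ℝ 1 f) (hr : ContDiff ℝ 1 r)
    (V : (Fin n → ℝ) → ℝ) (hV : Differentiable ℝ V)
    (x₀ : Fin n → ℝ) (a : Fin F → Fin m → ℝ)
    (x : ℕ → Fin n → ℝ) (hxdef : x = traj f x₀ (pad a))
    (Q : ℕ → (Fin m → ℝ) → ℝ)
    (hQdef : ∀ t, Q t = fun b => r (x t, b) + γ * V (f (x t, b)))
    (hbox : ∀ t : Fin F, ∀ i, a t i ∈ Set.Icc (-1 : ℝ) 1)
    (hgreedy : ∀ t : Fin F, ∀ b : Fin m → ℝ,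
      (∀ i, b i ∈ Set.Icc (-1 : ℝ) 1) → Q t b ≤ Q t (a t))
    (G : ℕ → Fin n → ℝ) (hGdef : ∀ t, G t = grad V (x t))
    (hGF : G F = 0)
    (hGrec : ∀ t < F, G t =
      gradX r (x t) (pad a t) + γ • (jacX f (x t) (pad a t))ᵀ.mulVec (G (t + 1)))
    (hsat : ∀ t : Fin F, ∀ i : Fin m,
      |a t i| = 1 ∧ fderiv ℝ (Q t) (a t) (Pi.single i 1) ≠ 0) :
    IsLocalMaxOn (Rtot F γ f r x₀)
      {as : Fin F → Fin m → ℝ | ∀ t i, as t i ∈ Set.Icc (-1 : ℝ) 1} a :=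
  stmt9_general F γ hγ f r hf hr V hV x₀ a x hxdef Q hQdef hbox hgreedy G hGdef hGF hGrec hsat
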